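/- Ratio-regularized improvement guarantee: for any two policies π̃ and π on a finite discounted MDP (with π(a|s) > 0 everywhere), J(π̃) − J(π) ≥ (1/(1−γ)) [ E_{(s,a)∼d_π} [ (π̃(a|s)/π(a|s)) A_π(s,a) ] − C · E_{(s,a)∼d_π} |π̃(a|s)/π(a|s) − 1| ], where C = ξγ/(1−γ) and ξ = max_{s,a} |A_π(s,a)|. -/

import Mathlib

open scoped BigOperators

/-- State transition matrix induced by policy `π`: `(Pmat P π) s s' = ∑ a, π s a * P s a s'`. -/
noncomputable def Pmat {S A : Type*} [Fintype A] (P : S → A → S → ℝ) (π : S → A → ℝ) :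
    Matrix S S ℝ := fun s s' => ∑ a, π s a * P s a s'

/-- State distribution at time `t` when starting from `p0` and following `π`. -/
noncomputable def stateDist {S A : Type*} [Fintype S] [DecidableEq S] [Fintype A]
    (P : S → A → S → ℝ) (π : S → A → ℝ) (p0 : S → ℝ) (t : ℕ) : S → ℝ :=
  (((Pmat P π).transpose) ^ t).mulVec p0

/-- Discounted state distribution `d_π(s) = (1-γ) ∑ γ^t Pr(s_t = s)`. -/
noncomputable def dDist {S A : Type*} [Fintype S] [DecidableEq S] [Fintype A]
    (P : S → A → S → ℝ) (π : S → A → ℝ) (p0 : S → ℝ) (γ : ℝ) (s : S) : ℝ :=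
  (1 - γ) * ∑' t : ℕ, γ ^ t * stateDist P π p0 t s

/-- Expected discounted return `J(π)` with initial distribution `p0`. -/
noncomputable def Jret {S A : Type*} [Fintype S] [DecidableEq S] [Fintype A]
    (P : S → A → S → ℝ) (π : S → A → ℝ) (r : S → A → ℝ) (p0 : S → ℝ) (γ : ℝ) : ℝ :=
  ∑' t : ℕ, γ ^ t * ∑ s, stateDist P π p0 t s * ∑ a, π s a * r s a

/-- Value function `V_π(s)`: return starting deterministically from `s`. -/
noncomputable def Vval {S A : Type*} [Fintype S] [Fintype A] [DecidableEq S]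
    (P : S → A → S → ℝ) (π : S → A → ℝ) (r : S → A → ℝ) (γ : ℝ) (s : S) : ℝ :=
  Jret P π r (fun s' => if s' = s then 1 else 0) γ

/-- Action-value function `Q_π(s,a)`. -/
noncomputable def Qval {S A : Type*} [Fintype S] [Fintype A] [DecidableEq S]
    (P : S → A → S → ℝ) (π : S → A → ℝ) (r : S → A → ℝ) (γ : ℝ) (s : S) (a : A) : ℝ :=
  r s a + γ * ∑ s', P s a s' * Vval P π r γ s'

/-- Advantage function `A_π(s,a) = Q_π(s,a) - V_π(s)`. -/
noncomputable def Adv {S A : Type*} [Fintype S] [Fintype A] [DecidableEq S]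
    (P : S → A → S → ℝ) (π : S → A → ℝ) (r : S → A → ℝ) (γ : ℝ) (s : S) (a : A) : ℝ :=
  Qval P π r γ s a - Vval P π r γ s

/-!
By the performance difference lemma, `(1 - γ) (J(π̃) - J(π)) = E_{s ∼ d_π̃} E_{a ∼ π̃} A_π(s, a)`,
and reweighting by `π̃ / π` turns the first term of the bound into the same expectation with `d_π̃`
replaced by `d_π`. Since `|E_{a ∼ π̃} A_π| ≤ ξ`, the error is at most `ξ ‖d_π̃ - d_π‖₁`. Subtracting
the flow equations `d = (1 - γ) p₀ + γ d P_π` of the two occupancy measures gives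
`d_π̃ - d_π = γ (d_π̃ - d_π) P_π̃ + γ d_π (P_π̃ - P_π)`, and as `P_π̃` is stochastic this yields
`‖d_π̃ - d_π‖₁ ≤ γ / (1 - γ) · E_{s ∼ d_π} ‖π̃(·|s) - π(·|s)‖₁`.
-/

open Finset Matrix

section

variable {n : Type*} [Fintype n]

lemma abs_vecMul_le_of_mem_rowStochastic [DecidableEq n] {M : Matrix n n ℝ}
    (hM : M ∈ rowStochastic ℝ n) (x : n → ℝ) (j : n) : |(x ᵥ* M) j| ≤ ∑ i, |x i| :=
  (abs_sum_le_sum_abs _ _).trans <| sum_le_sum fun i _ => by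
    rw [abs_mul, abs_of_nonneg (nonneg_of_mem_rowStochastic hM)]
    exact mul_le_of_le_one_right (abs_nonneg _) (le_one_of_mem_rowStochastic hM)

lemma sum_abs_vecMul_le (x : n → ℝ) (N : Matrix n n ℝ) :
    ∑ j, |(x ᵥ* N) j| ≤ ∑ i, |x i| * ∑ j, |N i j| := by
  calc ∑ j, |(x ᵥ* N) j| ≤ ∑ j, ∑ i, |x i| * |N i j| :=
        sum_le_sum fun j _ => (abs_sum_le_sum_abs _ _).trans_eq (by simp [abs_mul])
    _ = ∑ i, |x i| * ∑ j, |N i j| := by rw [sum_comm]; simp only [mul_sum]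

lemma abs_dotProduct_le (x f : n → ℝ) {ξ : ℝ} (hf : ∀ i, |f i| ≤ ξ) :
    |x ⬝ᵥ f| ≤ ξ * ∑ i, |x i| := by
  calc |x ⬝ᵥ f| ≤ ∑ i, |x i| * ξ :=
        (abs_sum_le_sum_abs _ _).trans <| sum_le_sum fun i _ => by
          rw [abs_mul]; exact mul_le_mul_of_nonneg_left (hf i) (abs_nonneg _)
    _ = ξ * ∑ i, |x i| := by rw [← sum_mul, mul_comm]

end

lemma summable_geometric_mul_of_abs_le {γ : ℝ} (hγ0 : 0 ≤ γ) (hγ1 : γ < 1) {c : ℕ → ℝ} {B : ℝ}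
    (hc : ∀ t, |c t| ≤ B) : Summable fun t => γ ^ t * c t :=
  .of_norm_bounded ((summable_geometric_of_lt_one hγ0 hγ1).mul_right B) fun t => by
    rw [Real.norm_eq_abs, abs_mul, abs_of_nonneg (pow_nonneg hγ0 t)]
    exact mul_le_mul_of_nonneg_left (hc t) (pow_nonneg hγ0 t)

section

variable {S A : Type*} [Fintype S] [Fintype A] {P : S → A → S → ℝ} {π : S → A → ℝ}

omit [Fintype S] in
lemma sub_Pmat_eq_Pmat_sub (π' : S → A → ℝ) : Pmat P π' - Pmat P π = Pmat P (π' - π) := by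
  ext s s'
  simp [Pmat, sub_mul]

lemma sum_abs_Pmat_le (hP0 : ∀ s a s', 0 ≤ P s a s') (hP1 : ∀ s a, ∑ s', P s a s' = 1)
    (μ : S → A → ℝ) (s : S) : ∑ s', |Pmat P μ s s'| ≤ ∑ a, |μ s a| := by
  calc ∑ s', |Pmat P μ s s'| ≤ ∑ s', ∑ a, |μ s a| * P s a s' :=
        sum_le_sum fun s' _ => (abs_sum_le_sum_abs _ _).trans_eq
          (by simp [abs_mul, abs_of_nonneg (hP0 _ _ _)])
    _ = ∑ a, |μ s a| := by rw [sum_comm]; simp [← mul_sum, hP1]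

lemma sum_mul_ratio_mul (d : S → ℝ) {π' : S → A → ℝ} (hπ : ∀ s a, 0 < π s a) (g : S → A → ℝ) :
    ∑ s, ∑ a, d s * π s a * (π' s a / π s a * g s a) = d ⬝ᵥ fun s => ∑ a, π' s a * g s a := by
  simp only [dotProduct, mul_sum]
  exact sum_congr rfl fun s _ => sum_congr rfl fun a _ => by field_simp [(hπ s a).ne']

lemma sum_mul_abs_ratio_sub_one (d : S → ℝ) {π' : S → A → ℝ} (hπ : ∀ s a, 0 < π s a) :
    ∑ s, ∑ a, d s * π s a * |π' s a / π s a - 1| = ∑ s, d s * ∑ a, |π' s a - π s a| := by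
  simp only [mul_sum]
  refine sum_congr rfl fun s _ => sum_congr rfl fun a _ => ?_
  rw [mul_assoc, ← abs_of_pos (hπ s a), ← abs_mul, abs_of_pos (hπ s a), mul_sub,
    mul_div_cancel₀ _ (hπ s a).ne', mul_one]

end

section MDP

variable {S A : Type*} [Fintype S] [DecidableEq S] [Fintype A] {P : S → A → S → ℝ}
  {π : S → A → ℝ} {p0 : S → ℝ} {γ : ℝ}

lemma Pmat_mem_rowStochastic (hP0 : ∀ s a s', 0 ≤ P s a s') (hP1 : ∀ s a, ∑ s', P s a s' = 1)
    (hπ0 : ∀ s a, 0 ≤ π s a) (hπ1 : ∀ s, ∑ a, π s a = 1) : Pmat P π ∈ rowStochastic ℝ S := by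
  refine mem_rowStochastic_iff_sum.2 ⟨fun s s' => sum_nonneg fun a _ => mul_nonneg (hπ0 s a)
    (hP0 s a s'), fun s => ?_⟩
  simp only [Pmat]
  rw [sum_comm]
  simp [← mul_sum, hP1, hπ1]

lemma stateDist_eq_vecMul (t : ℕ) : stateDist P π p0 t = p0 ᵥ* Pmat P π ^ t := by
  rw [stateDist, ← transpose_pow, mulVec_transpose]

lemma stateDist_succ (t : ℕ) : stateDist P π p0 (t + 1) = stateDist P π p0 t ᵥ* Pmat P π := by
  simp only [stateDist_eq_vecMul, vecMul_vecMul, pow_succ]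

lemma summable_stateDist (hM : Pmat P π ∈ rowStochastic ℝ S) (hγ0 : 0 ≤ γ) (hγ1 : γ < 1)
    (s : S) : Summable fun t => γ ^ t * stateDist P π p0 t s :=
  summable_geometric_mul_of_abs_le hγ0 hγ1 fun t => by
    rw [stateDist_eq_vecMul]
    exact abs_vecMul_le_of_mem_rowStochastic (pow_mem hM t) p0 s

lemma summable_stateDist_dotProduct (hM : Pmat P π ∈ rowStochastic ℝ S) (hγ0 : 0 ≤ γ)
    (hγ1 : γ < 1) (g : S → ℝ) : Summable fun t => γ ^ t * (stateDist P π p0 t ⬝ᵥ g) := by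
  simp only [dotProduct, mul_sum, ← mul_assoc]
  exact summable_sum fun s _ => (summable_stateDist hM hγ0 hγ1 s).mul_right (g s)

lemma tsum_stateDist_dotProduct (hM : Pmat P π ∈ rowStochastic ℝ S) (hγ0 : 0 ≤ γ) (hγ1 : γ < 1)
    (g : S → ℝ) :
    ∑' t, γ ^ t * (stateDist P π p0 t ⬝ᵥ g) = ∑ s, (∑' t, γ ^ t * stateDist P π p0 t s) * g s := by
  simp only [dotProduct, mul_sum, ← tsum_mul_right, ← mul_assoc]
  exact Summable.tsum_finsetSum fun s _ => (summable_stateDist hM hγ0 hγ1 s).mul_right (g s)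

lemma dDist_dotProduct (hM : Pmat P π ∈ rowStochastic ℝ S) (hγ0 : 0 ≤ γ) (hγ1 : γ < 1)
    (g : S → ℝ) :
    dDist P π p0 γ ⬝ᵥ g = (1 - γ) * ∑' t, γ ^ t * (stateDist P π p0 t ⬝ᵥ g) := by
  rw [tsum_stateDist_dotProduct hM hγ0 hγ1, mul_sum]
  simp only [dotProduct, dDist, mul_assoc]

lemma dDist_eq_smul_add_smul_vecMul (hM : Pmat P π ∈ rowStochastic ℝ S) (hγ0 : 0 ≤ γ)
    (hγ1 : γ < 1) :
    dDist P π p0 γ = (1 - γ) • p0 + γ • (dDist P π p0 γ ᵥ* Pmat P π) := by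
  ext s
  have hd := dDist_dotProduct (p0 := p0) hM hγ0 hγ1 fun i => Pmat P π i s
  have hx0 : stateDist P π p0 0 = p0 := by rw [stateDist_eq_vecMul, pow_zero, vecMul_one]
  calc dDist P π p0 γ s
      = (1 - γ) * (γ ^ 0 * stateDist P π p0 0 s
          + ∑' t, γ ^ (t + 1) * stateDist P π p0 (t + 1) s) := by
        rw [dDist, (summable_stateDist hM hγ0 hγ1 s).tsum_eq_zero_add]
    _ = (1 - γ) * p0 s
          + γ * ((1 - γ) * ∑' t, γ ^ t * (stateDist P π p0 t ⬝ᵥ fun i => Pmat P π i s)) := by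
        simp only [hx0, stateDist_succ, pow_zero, one_mul, pow_succ', mul_assoc, tsum_mul_left]
        rw [mul_add, mul_left_comm]
        rfl
    _ = ((1 - γ) • p0 + γ • (dDist P π p0 γ ᵥ* Pmat P π)) s := by
        rw [← hd]
        rfl

lemma dDist_nonneg (hM : Pmat P π ∈ rowStochastic ℝ S) (hp0 : ∀ s, 0 ≤ p0 s) (hγ0 : 0 ≤ γ)
    (hγ1 : γ < 1) (s : S) : 0 ≤ dDist P π p0 γ s := by
  refine mul_nonneg (sub_nonneg.2 hγ1.le) (tsum_nonneg fun t => mul_nonneg (pow_nonneg hγ0 t) ?_)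
  rw [stateDist_eq_vecMul]
  exact nonneg_vecMul_of_mem_rowStochastic (pow_mem hM t) hp0 s

lemma stateDist_dotProduct (t : ℕ) (g : S → ℝ) :
    stateDist P π p0 t ⬝ᵥ g = p0 ⬝ᵥ (Pmat P π ^ t *ᵥ g) := by
  rw [stateDist_eq_vecMul, dotProduct_mulVec]

lemma Jret_eq_dotProduct_Vval (hM : Pmat P π ∈ rowStochastic ℝ S) (hγ0 : 0 ≤ γ) (hγ1 : γ < 1)
    (r : S → A → ℝ) : Jret P π r p0 γ = p0 ⬝ᵥ Vval P π r γ := by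
  set g : S → ℝ := fun s => ∑ a, π s a * r s a
  have hrow (s : S) (t : ℕ) :
      stateDist P π (fun s' => if s' = s then 1 else 0) t ⬝ᵥ g = (Pmat P π ^ t *ᵥ g) s := by
    rw [stateDist_dotProduct]
    simp [dotProduct]
  have hs (s : S) : Summable fun t => γ ^ t * (Pmat P π ^ t *ᵥ g) s :=
    (summable_stateDist_dotProduct hM hγ0 hγ1 g).congr fun t => by rw [hrow]
  calc Jret P π r p0 γ = ∑' t, ∑ s, p0 s * (γ ^ t * (Pmat P π ^ t *ᵥ g) s) :=
        tsum_congr fun t => by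
          change γ ^ t * (stateDist P π p0 t ⬝ᵥ g) = _
          rw [stateDist_dotProduct, dotProduct, mul_sum]
          simp only [mul_left_comm]
    _ = ∑ s, p0 s * ∑' t, γ ^ t * (Pmat P π ^ t *ᵥ g) s := by
        simp only [Summable.tsum_finsetSum fun s _ => (hs s).mul_left (p0 s), tsum_mul_left]
    _ = p0 ⬝ᵥ Vval P π r γ := by
        simp only [dotProduct, Vval, Jret, ← hrow]
        rfl

variable (r : S → A → ℝ)

lemma sum_mul_Adv {π' : S → A → ℝ} (hπ'1 : ∀ s, ∑ a, π' s a = 1) (s : S) :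
    ∑ a, π' s a * Adv P π r γ s a
      = ∑ a, π' s a * r s a + γ * (Pmat P π' *ᵥ Vval P π r γ) s - Vval P π r γ s := by
  simp only [Adv, Qval, mul_sub, mul_add, sum_sub_distrib, sum_add_distrib, ← sum_mul, hπ'1,
    one_mul]
  congr 2
  simp only [mulVec, dotProduct, Pmat, mul_sum, sum_mul]
  rw [sum_comm]
  exact sum_congr rfl fun _ _ => sum_congr rfl fun _ _ => by ring

lemma performance_difference {π' : S → A → ℝ} (hM : Pmat P π ∈ rowStochastic ℝ S)
    (hM' : Pmat P π' ∈ rowStochastic ℝ S) (hπ'1 : ∀ s, ∑ a, π' s a = 1) (hγ0 : 0 ≤ γ)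
    (hγ1 : γ < 1) :
    dDist P π' p0 γ ⬝ᵥ (fun s => ∑ a, π' s a * Adv P π r γ s a)
      = (1 - γ) * (Jret P π' r p0 γ - Jret P π r p0 γ) := by
  set d := dDist P π' p0 γ
  set V := Vval P π r γ
  have hA : (fun s => ∑ a, π' s a * Adv P π r γ s a)
      = (fun s => ∑ a, π' s a * r s a) + γ • (Pmat P π' *ᵥ V) - V :=
    funext (sum_mul_Adv r hπ'1)
  have hd : γ • (d ᵥ* Pmat P π') = d - (1 - γ) • p0 :=
    eq_sub_of_add_eq' (dDist_eq_smul_add_smul_vecMul hM' hγ0 hγ1).symm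
  have hJ' : d ⬝ᵥ (fun s => ∑ a, π' s a * r s a) = (1 - γ) * Jret P π' r p0 γ :=
    dDist_dotProduct hM' hγ0 hγ1 _
  rw [hA, dotProduct_sub, dotProduct_add, dotProduct_smul, dotProduct_mulVec, ← smul_dotProduct,
    hd, sub_dotProduct, smul_dotProduct, hJ', Jret_eq_dotProduct_Vval hM hγ0 hγ1, smul_eq_mul]
  ring

lemma sum_abs_dDist_sub_le {π' : S → A → ℝ} (hP0 : ∀ s a s', 0 ≤ P s a s')
    (hP1 : ∀ s a, ∑ s', P s a s' = 1) (hM : Pmat P π ∈ rowStochastic ℝ S)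
    (hM' : Pmat P π' ∈ rowStochastic ℝ S) (hp0 : ∀ s, 0 ≤ p0 s) (hγ0 : 0 ≤ γ) (hγ1 : γ < 1) :
    ∑ s, |dDist P π' p0 γ s - dDist P π p0 γ s|
      ≤ γ / (1 - γ) * ∑ s, dDist P π p0 γ s * ∑ a, |π' s a - π s a| := by
  set d := dDist P π p0 γ
  set d' := dDist P π' p0 γ
  set e := d' - d
  have he : e = γ • (e ᵥ* Pmat P π') + γ • (d ᵥ* (Pmat P π' - Pmat P π)) := by
    calc e = ((1 - γ) • p0 + γ • (d' ᵥ* Pmat P π')) - ((1 - γ) • p0 + γ • (d ᵥ* Pmat P π)) :=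
          congrArg₂ (· - ·) (dDist_eq_smul_add_smul_vecMul hM' hγ0 hγ1)
            (dDist_eq_smul_add_smul_vecMul hM hγ0 hγ1)
      _ = _ := by rw [sub_vecMul, vecMul_sub]; module
  have he' (s : S) : e s = γ * (e ᵥ* Pmat P π') s + γ * (d ᵥ* (Pmat P π' - Pmat P π)) s :=
    congrFun he s
  have hrow' (s : S) : ∑ s', |Pmat P π' s s'| = 1 := by
    simp only [abs_of_nonneg (nonneg_of_mem_rowStochastic hM'), sum_row_of_mem_rowStochastic hM']
  have hrow (s : S) : ∑ s', |(Pmat P π' - Pmat P π) s s'| ≤ ∑ a, |π' s a - π s a| := by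
    rw [sub_Pmat_eq_Pmat_sub]
    exact sum_abs_Pmat_le hP0 hP1 _ s
  have hcontr : ∑ s, |e s| ≤ γ * ∑ s, |e s| + γ * ∑ s, d s * ∑ a, |π' s a - π s a| := by
    calc ∑ s, |e s|
        ≤ ∑ s, (γ * |(e ᵥ* Pmat P π') s| + γ * |(d ᵥ* (Pmat P π' - Pmat P π)) s|) :=
          sum_le_sum fun s _ => by
            rw [he' s]
            exact (abs_add_le _ _).trans_eq (by rw [abs_mul, abs_mul, abs_of_nonneg hγ0])
      _ = γ * ∑ s, |(e ᵥ* Pmat P π') s| + γ * ∑ s, |(d ᵥ* (Pmat P π' - Pmat P π)) s| := by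
          rw [sum_add_distrib, mul_sum, mul_sum]
      _ ≤ γ * ∑ s, |e s| + γ * ∑ s, d s * ∑ a, |π' s a - π s a| := by
          gcongr γ * ?_ + γ * ?_
          · simpa only [hrow', mul_one] using sum_abs_vecMul_le e (Pmat P π')
          · refine (sum_abs_vecMul_le d _).trans (sum_le_sum fun s _ => ?_)
            rw [abs_of_nonneg (dDist_nonneg hM hp0 hγ0 hγ1 s)]
            exact mul_le_mul_of_nonneg_left (hrow s) (dDist_nonneg hM hp0 hγ0 hγ1 s)
  change ∑ s, |e s| ≤ _
  rw [div_mul_eq_mul_div, le_div_iff₀ (sub_pos.2 hγ1)]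
  linarith

end MDP

theorem ratio_regularized_improvement_guarantee_general {S A : Type*}
    [Fintype S] [Fintype A] [DecidableEq S] [Nonempty S] [Nonempty A]
    (P : S → A → S → ℝ) (π πt : S → A → ℝ) (r : S → A → ℝ) (p0 : S → ℝ) (γ : ℝ)
    (hγ0 : 0 ≤ γ) (hγ1 : γ < 1)
    (hP0 : ∀ s a s', 0 ≤ P s a s') (hP1 : ∀ s a, ∑ s', P s a s' = 1)
    (hπpos : ∀ s a, 0 < π s a) (hπ1 : ∀ s, ∑ a, π s a = 1)
    (hπt0 : ∀ s a, 0 ≤ πt s a) (hπt1 : ∀ s, ∑ a, πt s a = 1)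
    (hp00 : ∀ s, 0 ≤ p0 s) :
    Jret P πt r p0 γ - Jret P π r p0 γ ≥
      (1 / (1 - γ)) *
        ((∑ s, ∑ a, dDist P π p0 γ s * π s a * (πt s a / π s a * Adv P π r γ s a)) -
          ((Finset.univ.sup' Finset.univ_nonempty
              fun sa : S × A => |Adv P π r γ sa.1 sa.2|) * γ / (1 - γ)) *
            ∑ s, ∑ a, dDist P π p0 γ s * π s a * |πt s a / π s a - 1|) := by
  have hM := Pmat_mem_rowStochastic hP0 hP1 (fun s a => (hπpos s a).le) hπ1
  have hMt := Pmat_mem_rowStochastic hP0 hP1 hπt0 hπt1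
  set d := dDist P π p0 γ
  set ξ := univ.sup' univ_nonempty fun sa : S × A => |Adv P π r γ sa.1 sa.2|
  set f : S → ℝ := fun s => ∑ a, πt s a * Adv P π r γ s a
  have hξ (s : S) (a : A) : |Adv P π r γ s a| ≤ ξ :=
    le_sup' (fun sa : S × A => |Adv P π r γ sa.1 sa.2|) (mem_univ (s, a))
  have hξ0 : 0 ≤ ξ := (abs_nonneg _).trans (hξ (Classical.arbitrary S) (Classical.arbitrary A))
  have hf (s : S) : |f s| ≤ ξ :=
    (abs_dotProduct_le (πt s) _ (hξ s)).trans_eq (by simp [abs_of_nonneg (hπt0 s _), hπt1])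
  have hpdl : dDist P πt p0 γ ⬝ᵥ f = (1 - γ) * (Jret P πt r p0 γ - Jret P π r p0 γ) :=
    performance_difference r hM hMt hπt1 hγ0 hγ1
  have hdiff : |dDist P πt p0 γ ⬝ᵥ f - d ⬝ᵥ f| ≤ ξ * ∑ s, |(dDist P πt p0 γ - d) s| := by
    rw [← sub_dotProduct]
    exact abs_dotProduct_le _ f hf
  have hgap : ξ * ∑ s, |(dDist P πt p0 γ - d) s|
      ≤ ξ * γ / (1 - γ) * ∑ s, d s * ∑ a, |πt s a - π s a| :=
    (mul_le_mul_of_nonneg_left (sum_abs_dDist_sub_le hP0 hP1 hM hMt hp00 hγ0 hγ1) hξ0).trans_eq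
      (by ring)
  rw [sum_mul_ratio_mul d hπpos, sum_mul_abs_ratio_sub_one d hπpos, ge_iff_le, one_div,
    inv_mul_le_iff₀ (sub_pos.2 hγ1), ← hpdl]
  linarith [neg_abs_le (dDist P πt p0 γ ⬝ᵥ f - d ⬝ᵥ f)]

theorem ratio_regularized_improvement_guarantee {S A : Type*}
    [Fintype S] [Fintype A] [DecidableEq S] [Nonempty S] [Nonempty A]
    (P : S → A → S → ℝ) (π πt : S → A → ℝ) (r : S → A → ℝ) (p0 : S → ℝ) (γ : ℝ)
    (hγ0 : 0 ≤ γ) (hγ1 : γ < 1)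
    (hP0 : ∀ s a s', 0 ≤ P s a s') (hP1 : ∀ s a, ∑ s', P s a s' = 1)
    (hπpos : ∀ s a, 0 < π s a) (hπ1 : ∀ s, ∑ a, π s a = 1)
    (hπt0 : ∀ s a, 0 ≤ πt s a) (hπt1 : ∀ s, ∑ a, πt s a = 1)
    (hp00 : ∀ s, 0 ≤ p0 s) (hp01 : ∑ s, p0 s = 1) :
    Jret P πt r p0 γ - Jret P π r p0 γ ≥
      (1 / (1 - γ)) *
        ((∑ s, ∑ a, dDist P π p0 γ s * π s a * (πt s a / π s a * Adv P π r γ s a)) -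
          ((Finset.univ.sup' Finset.univ_nonempty
              fun sa : S × A => |Adv P π r γ sa.1 sa.2|) * γ / (1 - γ)) *
            ∑ s, ∑ a, dDist P π p0 γ s * π s a * |πt s a / π s a - 1|) :=
  ratio_regularized_improvement_guarantee_general P π πt r p0 γ hγ0 hγ1 hP0 hP1 hπpos hπ1 hπt0 hπt1
    hp00
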